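/- Let G be a connected P_5-free graph whose block-cut tree has diameter 4, and let C be the central block of G (the unique block that is not a leaf in the block-cut tree). Then the set of cut vertices of G induces a complete subgraph of G, and all cut vertices lie in C. -/

import Mathlib

open Classical

variable {V : Type}

/-- Reachability within a vertex subset `s` of the graph `G`. -/
def ReachIn (G : SimpleGraph V) (s : Finset V) (u v : V) : Prop :=
  Relation.ReflTransGen (fun a b => a ∈ s ∧ b ∈ s ∧ G.Adj a b) u v

/-- The induced subgraph of `G` on `s` is (nonempty and) connected. -/
def ConnIn (G : SimpleGraph V) (s : Finset V) : Prop :=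
  s.Nonempty ∧ ∀ u ∈ s, ∀ v ∈ s, ReachIn G s u v

/-- The vertex set of the connected component of `v` in the induced subgraph on `s`. -/
noncomputable def compIn (G : SimpleGraph V) (s : Finset V) (v : V) : Finset V :=
  s.filter (fun u => ReachIn G s v u)

/-- Fuel-based recursion computing the treedepth of the induced subgraph of `G` on `s`
(correct whenever the fuel is at least `s.card`): treedepth of the null graph is `0`;
for a connected graph it is `1 + min_v td(G - v)`; otherwise the max over components. -/
noncomputable def tdAux (G : SimpleGraph V) : ℕ → Finset V → ℕ
  | 0, _ => 0
  | n+1, s =>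
    if hs : s = ∅ then 0
    else if ConnIn G s then
      1 + s.inf' (Finset.nonempty_of_ne_empty hs) (fun v => tdAux G n (s.erase v))
    else
      s.sup (fun v => tdAux G n (compIn G s v))

/-- The treedepth of the induced subgraph of `G` on the vertex set `s`. -/
noncomputable def tdOn (G : SimpleGraph V) (s : Finset V) : ℕ := tdAux G s.card s

/-- The treedepth of a finite graph. -/
noncomputable def td (G : SimpleGraph V) [Fintype V] : ℕ := tdOn G Finset.univ

/-- `B` induces a block-like graph: connected and with no cut vertex
(removing any vertex leaves it connected, when nonempty). -/
def IsBlockSet (G : SimpleGraph V) (B : Finset V) : Prop :=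
  ConnIn G B ∧ ∀ v ∈ B, (B.erase v).Nonempty → ConnIn G (B.erase v)

/-- `B` is a block of the induced subgraph of `G` on `s`: a maximal connected
subgraph without a cut vertex. -/
def IsBlock (G : SimpleGraph V) (s B : Finset V) : Prop :=
  B ⊆ s ∧ IsBlockSet G B ∧ ∀ B' : Finset V, B ⊆ B' → B' ⊆ s → IsBlockSet G B' → B' = B

/-- Fuel-based recursion computing the 2-treedepth of the induced subgraph of `G` on `s`
(correct whenever the fuel is at least `s.card`): `0` for the null graph;
`1 + min_v td₂(G - v)` if the graph is a block; the max over blocks otherwise. -/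
noncomputable def td2Aux (G : SimpleGraph V) : ℕ → Finset V → ℕ
  | 0, _ => 0
  | n+1, s =>
    if hs : s = ∅ then 0
    else if IsBlockSet G s then
      1 + s.inf' (Finset.nonempty_of_ne_empty hs) (fun v => td2Aux G n (s.erase v))
    else
      (s.powerset.filter (fun B => IsBlock G s B)).sup (fun B => td2Aux G n B)

/-- The 2-treedepth of the induced subgraph of `G` on `s`. -/
noncomputable def td2On (G : SimpleGraph V) (s : Finset V) : ℕ := td2Aux G s.card s

/-- The 2-treedepth of a finite graph. -/
noncomputable def td2 (G : SimpleGraph V) [Fintype V] : ℕ := td2On G Finset.univ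

/-- `G` contains a path on `m` vertices as a subgraph. -/
def HasPathOn (G : SimpleGraph V) (m : ℕ) : Prop :=
  ∃ p : Fin m → V, Function.Injective p ∧
    ∀ i : Fin m, ∀ h : i.1 + 1 < m, G.Adj (p i) (p ⟨i.1 + 1, h⟩)

/-- `G` contains an induced path on `m` vertices: `m` distinct vertices with
adjacency exactly between consecutive ones. -/
def HasInducedPathOn (G : SimpleGraph V) (m : ℕ) : Prop :=
  ∃ p : Fin m → V, Function.Injective p ∧
    ∀ i j : Fin m, G.Adj (p i) (p j) ↔ (i.1 + 1 = j.1 ∨ j.1 + 1 = i.1)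

/-- `G` is `P_t`-free: it has no induced path on `t` vertices. -/
def PtFree (G : SimpleGraph V) (t : ℕ) : Prop := ¬ HasInducedPathOn G t

/-- `v` is a cut vertex of the finite graph `G`: removing it disconnects two
vertices that were connected in `G`. -/
def IsCutVertex (G : SimpleGraph V) [Fintype V] (v : V) : Prop :=
  ∃ u w : V, u ≠ v ∧ w ≠ v ∧ ReachIn G Finset.univ u w ∧
    ¬ ReachIn G (Finset.univ.erase v) u w

/-- Vertices of the block-cut tree of `G`: blocks of `G` together with cut vertices of `G`. -/
def BCVert (G : SimpleGraph V) [Fintype V] : Type :=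
  {B : Finset V // IsBlock G Finset.univ B} ⊕ {v : V // IsCutVertex G v}

/-- The block-cut tree (forest of blocks) of `G`: a block `B` is adjacent to a
cut vertex `v` exactly when `v ∈ B`. -/
def bcTree (G : SimpleGraph V) [Fintype V] : SimpleGraph (BCVert G) where
  Adj x y := match x, y with
    | Sum.inl B, Sum.inr v => v.1 ∈ B.1
    | Sum.inr v, Sum.inl B => v.1 ∈ B.1
    | _, _ => False
  symm := ⟨by rintro (B|v) (B'|v') h <;> simp_all⟩
  loopless := ⟨by rintro (B|v) h <;> simp_all⟩

/-!
Let `u`, `w` be non-adjacent cut vertices of the connected graph `G`. Pick a neighbour `a` of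
`u` that `u` separates from `w`, and a neighbour `b` of `w` that `w` separates from `u`. A
shortest `a`–`b` path must pass through both `u` and `w`, which lie at distance at least two
from each other, so it has at least five vertices; its first five vertices form an induced
`P₅`, since shortest paths are isometric. Hence the cut vertices form a clique. This clique
contains the two cut vertices of the non-leaf block `C`; a clique is contained in a block, and
two blocks sharing two vertices coincide, so every cut vertex lies in `C`.
-/

open SimpleGraph

section Reach

variable {G : SimpleGraph V}

lemma ReachIn.symm {s : Finset V} {u v : V} (h : ReachIn G s u v) : ReachIn G s v u :=
  Relation.ReflTransGen.mono (fun _ _ hab => ⟨hab.2.1, hab.1, hab.2.2.symm⟩) _ _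
    (Relation.reflTransGen_swap.2 h)

lemma ReachIn.mono {s t : Finset V} {u v : V} (hst : s ⊆ t) (h : ReachIn G s u v) :
    ReachIn G t u v :=
  Relation.ReflTransGen.mono (fun _ _ hab => ⟨hst hab.1, hst hab.2.1, hab.2.2⟩) _ _ h

lemma ReachIn.trans {s : Finset V} {u v w : V} (h₁ : ReachIn G s u v) (h₂ : ReachIn G s v w) :
    ReachIn G s u w :=
  Relation.ReflTransGen.trans h₁ h₂

lemma SimpleGraph.Walk.reachIn {s : Finset V} {u v : V} (p : G.Walk u v)
    (hs : ∀ x ∈ p.support, x ∈ s) : ReachIn G s u v := by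
  induction p with
  | nil => exact .refl
  | cons h p ih =>
    simp only [Walk.support_cons, List.mem_cons, forall_eq_or_imp] at hs
    exact Relation.ReflTransGen.head ⟨hs.1, hs.2 _ p.start_mem_support, h⟩ (ih hs.2)

lemma exists_adj_reachIn_erase [Fintype V] (hconn : G.Preconnected) {u q : V} (hq : q ≠ u) :
    ∃ b, G.Adj u b ∧ ReachIn G (Finset.univ.erase u) b q := by
  obtain ⟨p, hp⟩ := (hconn u q).exists_path_of_dist
  cases p with
  | nil => exact absurd rfl hq
  | cons h p =>
    refine ⟨_, h, p.reachIn fun x hx => Finset.mem_erase.2 ⟨?_, Finset.mem_univ x⟩⟩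
    rintro rfl
    exact (Walk.cons_isPath_iff h p).1 hp.1 |>.2 hx

lemma IsCutVertex.exists_adj_not_reachIn [Fintype V] (hconn : G.Preconnected) {u : V}
    (hu : IsCutVertex G u) (w : V) :
    ∃ a, G.Adj u a ∧ ¬ ReachIn G (Finset.univ.erase u) a w := by
  obtain ⟨p, q, hp, hq, -, hpq⟩ := hu
  by_contra! hall
  obtain ⟨a, hua, hap⟩ := exists_adj_reachIn_erase hconn hp
  obtain ⟨b, hub, hbq⟩ := exists_adj_reachIn_erase hconn hq
  exact hpq (hap.symm.trans ((hall a hua).trans ((hall b hub).symm.trans hbq)))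

end Reach

section Geodesic

variable {G : SimpleGraph V}

lemma SimpleGraph.Walk.dist_getVert_getVert {u v : V} {p : G.Walk u v}
    (hp : p.length = G.dist u v) {i j : ℕ} (hij : i ≤ j) (hj : j ≤ p.length) :
    G.dist (p.getVert i) (p.getVert j) = j - i := by
  have hsub := length_eq_dist_of_subwalk hp
    ((Walk.isSubwalk_take _ (j - i)).trans (p.isSubwalk_drop i))
  rw [Walk.take_length, Walk.drop_length, Walk.drop_getVert, Nat.add_sub_cancel' hij] at hsub
  omega

lemma hasInducedPathOn_of_dist_eq {m : ℕ} (f : Fin m → V)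
    (hf : ∀ i j : Fin m, i ≤ j → G.dist (f i) (f j) = j - i) : HasInducedPathOn G m := by
  have hdist : ∀ i j : Fin m, G.dist (f i) (f j) = max (i : ℕ) j - min (i : ℕ) j := by
    intro i j
    rcases le_total i j with h | h
    · rw [hf i j h]
      omega
    · rw [SimpleGraph.dist_comm, hf j i h]
      omega
  refine ⟨f, fun i j hij => Fin.ext ?_, fun i j => ?_⟩
  · have := hdist i j
    rw [hij, dist_self] at this
    omega
  · rw [← dist_eq_one_iff_adj, hdist]
    omega

lemma hasInducedPathOn_of_le_dist {a b : V} (hab : G.Reachable a b) {m : ℕ}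
    (hm : m ≤ G.dist a b + 1) : HasInducedPathOn G m := by
  obtain ⟨p, hp⟩ := hab.exists_walk_length_eq_dist
  exact hasInducedPathOn_of_dist_eq (fun i => p.getVert i) fun i j hij =>
    p.dist_getVert_getVert hp hij (by omega)

end Geodesic

section Blocks

variable {G : SimpleGraph V}

lemma ConnIn.union {s t : Finset V} {x : V} (hs : ConnIn G s) (ht : ConnIn G t)
    (hxs : x ∈ s) (hxt : x ∈ t) : ConnIn G (s ∪ t) := by
  have hx : ∀ y ∈ s ∪ t, ReachIn G (s ∪ t) y x := by
    intro y hy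
    rcases Finset.mem_union.1 hy with hy | hy
    · exact (hs.2 y hy x hxs).mono Finset.subset_union_left
    · exact (ht.2 y hy x hxt).mono Finset.subset_union_right
  exact ⟨⟨x, Finset.mem_union_left _ hxs⟩, fun y hy z hz => (hx y hy).trans (hx z hz).symm⟩

lemma connIn_of_isClique {B : Finset V} (h : G.IsClique (B : Set V)) (hB : B.Nonempty) :
    ConnIn G B := by
  refine ⟨hB, fun u hu v hv => ?_⟩
  rcases eq_or_ne u v with rfl | huv
  · exact .refl
  · exact .single ⟨hu, hv, h hu hv huv⟩

lemma isBlockSet_of_isClique {B : Finset V} (h : G.IsClique (B : Set V)) (hB : B.Nonempty) :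
    IsBlockSet G B :=
  ⟨connIn_of_isClique h hB, fun _ _ hne =>
    connIn_of_isClique (h.subset (Finset.coe_subset.2 (Finset.erase_subset _ _))) hne⟩

lemma IsBlockSet.connIn_erase {B : Finset V} (hB : IsBlockSet G B) {z : V}
    (hne : (B.erase z).Nonempty) : ConnIn G (B.erase z) := by
  by_cases hz : z ∈ B
  · exact hB.2 z hz hne
  · rw [Finset.erase_eq_of_notMem hz]
    exact hB.1

lemma IsBlockSet.union {B₁ B₂ : Finset V} {x y : V} (h₁ : IsBlockSet G B₁)
    (h₂ : IsBlockSet G B₂) (hx₁ : x ∈ B₁) (hx₂ : x ∈ B₂) (hy₁ : y ∈ B₁) (hy₂ : y ∈ B₂)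
    (hxy : x ≠ y) : IsBlockSet G (B₁ ∪ B₂) := by
  refine ⟨h₁.1.union h₂.1 hx₁ hx₂, fun z _ _ => ?_⟩
  obtain ⟨r, hrz, hr₁, hr₂⟩ : ∃ r, r ≠ z ∧ r ∈ B₁ ∧ r ∈ B₂ := by
    rcases eq_or_ne x z with rfl | hxz
    · exact ⟨y, hxy.symm, hy₁, hy₂⟩
    · exact ⟨x, hxz, hx₁, hx₂⟩
  rw [Finset.erase_union_distrib]
  exact (h₁.connIn_erase ⟨r, Finset.mem_erase.2 ⟨hrz, hr₁⟩⟩).union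
    (h₂.connIn_erase ⟨r, Finset.mem_erase.2 ⟨hrz, hr₂⟩⟩)
    (Finset.mem_erase.2 ⟨hrz, hr₁⟩) (Finset.mem_erase.2 ⟨hrz, hr₂⟩)

lemma IsBlock.eq_of_mem_of_mem {s B₁ B₂ : Finset V} {x y : V} (h₁ : IsBlock G s B₁)
    (h₂ : IsBlock G s B₂) (hx₁ : x ∈ B₁) (hx₂ : x ∈ B₂) (hy₁ : y ∈ B₁) (hy₂ : y ∈ B₂)
    (hxy : x ≠ y) : B₁ = B₂ := by
  have hu := h₁.2.1.union h₂.2.1 hx₁ hx₂ hy₁ hy₂ hxy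
  have hus : B₁ ∪ B₂ ⊆ s := Finset.union_subset h₁.1 h₂.1
  rw [← h₁.2.2 _ Finset.subset_union_left hus hu, h₂.2.2 _ Finset.subset_union_right hus hu]

lemma exists_isBlock_superset {s T : Finset V} (hTs : T ⊆ s) (hT : IsBlockSet G T) :
    ∃ D, IsBlock G s D ∧ T ⊆ D := by
  let F := s.powerset.filter fun B => T ⊆ B ∧ IsBlockSet G B
  have hTF : T ∈ F := by simp [F, hTs, hT]
  obtain ⟨D, hDF, hmax⟩ := F.exists_max_image Finset.card ⟨T, hTF⟩
  simp only [F, Finset.mem_filter, Finset.mem_powerset] at hDF hmax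
  refine ⟨D, ⟨hDF.1, hDF.2.2, fun B hDB hBs hB => ?_⟩, hDF.2.1⟩
  exact (Finset.eq_of_subset_of_card_le hDB (hmax B ⟨hBs, hDF.2.1.trans hDB, hB⟩)).symm

lemma IsBlock.subset_of_isClique {s C K : Finset V} (hC : IsBlock G s C) (hKs : K ⊆ s)
    (hK : G.IsClique (K : Set V)) {x y : V} (hxK : x ∈ K) (hyK : y ∈ K) (hxC : x ∈ C)
    (hyC : y ∈ C) (hxy : x ≠ y) : K ⊆ C := by
  obtain ⟨D, hD, hKD⟩ := exists_isBlock_superset hKs (isBlockSet_of_isClique hK ⟨x, hxK⟩)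
  rwa [← hD.eq_of_mem_of_mem hC (hKD hxK) hxC (hKD hyK) hyC hxy]

end Blocks

section CutVertices

variable [Fintype V] {G : SimpleGraph V}

lemma SimpleGraph.Walk.mem_support_of_not_reachIn_erase {a b u w : V} (p : G.Walk a b)
    (hbw : G.Adj b w) (hwu : w ≠ u) (haw : ¬ ReachIn G (Finset.univ.erase u) a w) :
    u ∈ p.support := by
  by_contra hu
  refine haw ((p.concat hbw).reachIn fun x hx => Finset.mem_erase.2 ⟨?_, Finset.mem_univ x⟩)
  rintro rfl
  simp only [Walk.support_concat, List.mem_append, List.mem_singleton] at hx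
  exact hx.elim hu hwu.symm

lemma IsCutVertex.adj (hconn : G.Connected) (hfree : PtFree G 5) {u w : V}
    (hu : IsCutVertex G u) (hw : IsCutVertex G w) (huw : u ≠ w) : G.Adj u w := by
  by_contra hnadj
  obtain ⟨a, hua, haw⟩ := hu.exists_adj_not_reachIn hconn.preconnected w
  obtain ⟨b, hwb, hbu⟩ := hw.exists_adj_not_reachIn hconn.preconnected u
  obtain ⟨p, hp⟩ := hconn.exists_walk_length_eq_dist a b
  have hu_mem : u ∈ p.support := p.mem_support_of_not_reachIn_erase hwb.symm huw.symm haw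
  have hw_mem : w ∈ p.support := by
    simpa using p.reverse.mem_support_of_not_reachIn_erase hua.symm huw hbu
  obtain ⟨i, rfl, hi⟩ := Walk.mem_support_iff_exists_getVert.1 hu_mem
  obtain ⟨j, rfl, hj⟩ := Walk.mem_support_iff_exists_getVert.1 hw_mem
  have hi₀ : i ≠ 0 := by rintro rfl; exact hua.ne p.getVert_zero
  have hi_end : i ≠ p.length := by rintro rfl; exact hbu (by rw [p.getVert_length]; exact .refl)
  have hj₀ : j ≠ 0 := by rintro rfl; exact haw (by rw [p.getVert_zero]; exact .refl)
  have hj_end : j ≠ p.length := by rintro rfl; exact hwb.ne p.getVert_length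
  have hgap := hconn.one_lt_dist_of_ne_of_not_adj huw hnadj
  have hlen : 4 ≤ p.length := by
    rcases le_total i j with h | h
    · rw [p.dist_getVert_getVert hp h hj] at hgap
      omega
    · rw [SimpleGraph.dist_comm, p.dist_getVert_getVert hp h hi] at hgap
      omega
  exact hfree (hasInducedPathOn_of_le_dist (hconn a b) (by omega))

theorem isClique_setOf_isCutVertex (hconn : G.Connected) (hfree : PtFree G 5) :
    G.IsClique {v | IsCutVertex G v} :=
  fun _ hu _ hw huw => hu.adj hconn hfree hw huw

end CutVertices

theorem p5free_diam4_central_general {V : Type} [Fintype V] (G : SimpleGraph V)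
    (hconn : G.Connected) (hfree : PtFree G 5)
    (C : Finset V) (hC : IsBlock G Finset.univ C)
    (hnotleaf : ∃ x y : BCVert G, x ≠ y ∧
      (bcTree G).Adj (Sum.inl ⟨C, hC⟩) x ∧ (bcTree G).Adj (Sum.inl ⟨C, hC⟩) y) :
    (∀ u w : V, IsCutVertex G u → IsCutVertex G w → u ≠ w → G.Adj u w) ∧
    (∀ u : V, IsCutVertex G u → u ∈ C) := by
  have hK := isClique_setOf_isCutVertex hconn hfree
  refine ⟨fun u w hu hw huw => hK hu hw huw, fun u hu => ?_⟩
  obtain ⟨x, y, hxy, hx, hy⟩ := hnotleaf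
  rcases x with _ | x
  · exact hx.elim
  rcases y with _ | y
  · exact hy.elim
  have hxy' : x.1 ≠ y.1 := fun h => hxy (congrArg Sum.inr (Subtype.ext h))
  let K := Finset.univ.filter (IsCutVertex G)
  have hKC : K ⊆ C := hC.subset_of_isClique K.subset_univ (by simpa [K] using hK)
    (by simpa [K] using x.2) (by simpa [K] using y.2) hx hy hxy'
  exact hKC (by simpa [K] using hu)

theorem p5free_diam4_central {V : Type} [Fintype V] (G : SimpleGraph V)
    (hconn : G.Connected) (hfree : PtFree G 5)
    (hdiam : (bcTree G).diam = 4)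
    (C : Finset V) (hC : IsBlock G Finset.univ C)
    (hnotleaf : ∃ x y : BCVert G, x ≠ y ∧
      (bcTree G).Adj (Sum.inl ⟨C, hC⟩) x ∧ (bcTree G).Adj (Sum.inl ⟨C, hC⟩) y) :
    (∀ u w : V, IsCutVertex G u → IsCutVertex G w → u ≠ w → G.Adj u w) ∧
    (∀ u : V, IsCutVertex G u → u ∈ C) :=
  p5free_diam4_central_general G hconn hfree C hC hnotleaf
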